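/- Let n, D ∈ ℕ with 0 < 1/n ≪ ρ ≪ ν ≪ τ ≪ α < 1. Let G be a D-regular graph on n vertices with D ≥ αn, and let U be a ρ-component of G (i.e. |U| ≥ √ρ·n and e(U, V(G)\U) ≤ ρn²). Let S ⊆ U with |S| ≥ τ|U|, and let N := RN_{ν,U}(S) be the set of vertices of G[U] having at least ν|U| neighbours in S. Then |N| ≥ |S| - √ν·n and |N| ≥ D - √ν·n. -/

import Mathlib

/-!
Double count the edges between `S` and `U`. As `G` is `D`-regular and at most `ρn²` edges leave
`U`, the vertices of `U` receive at least `D|S| - ρn²` edges from `S`. A vertex outside the robust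
neighbourhood `N` receives fewer than `ν|U|` of them, and a vertex of `N` at most `min(D, |S|)`, so
`|N| · min(D, |S|) ≥ D|S| - ρn² - ν|U|²`. Dividing by `D ≥ αn`, respectively by
`|S| ≥ τ|U| ≥ τ√ρ n`, gives the two bounds as soon as `√ν ≤ min(α, τ)/2` and `√ρ ≤ √ν τ/2`.
-/

open Finset

lemma Finset.sum_le_card_filter_mul_add_card_mul {ι : Type*} (s : Finset ι) (f : ι → ℝ)
    {b c : ℝ} (hc : 0 ≤ c) (hb : ∀ i ∈ s, c ≤ f i → f i ≤ b) :
    ∑ i ∈ s, f i ≤ #{i ∈ s | c ≤ f i} * b + #s * c := by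
  rw [← sum_filter_add_sum_filter_not s fun i => c ≤ f i]
  refine add_le_add ?_ ?_
  · simpa using sum_le_card_nsmul _ f b fun i hi => hb i (mem_filter.1 hi).1 (mem_filter.1 hi).2
  · calc ∑ i ∈ s with ¬c ≤ f i, f i ≤ #{i ∈ s | ¬c ≤ f i} * c := by
          simpa using sum_le_card_nsmul _ f c fun i hi => (not_le.1 (mem_filter.1 hi).2).le
      _ ≤ #s * c := by gcongr; exact filter_subset _ s

namespace SimpleGraph
variable {V : Type*} [Fintype V] [DecidableEq V] (G : SimpleGraph V) [DecidableRel G.Adj]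

lemma neighborFinset_inter_eq_filter (v : V) (t : Finset V) :
    G.neighborFinset v ∩ t = {w ∈ t | G.Adj v w} := by
  ext; simp [and_comm]

lemma card_interedges_eq_sum_card_neighborFinset_inter (s t : Finset V) :
    #(G.interedges s t) = ∑ v ∈ s, #(G.neighborFinset v ∩ t) := by
  simp only [interedges_def, card_filter, sum_product, neighborFinset_inter_eq_filter]

lemma sum_card_neighborFinset_inter_comm (s t : Finset V) :
    ∑ v ∈ s, #(G.neighborFinset v ∩ t) = ∑ v ∈ t, #(G.neighborFinset v ∩ s) := by
  simp only [neighborFinset_inter_eq_filter]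
  simpa [bipartiteAbove, bipartiteBelow, G.adj_comm] using
    sum_card_bipartiteAbove_eq_sum_card_bipartiteBelow (s := s) (t := t) G.Adj

variable {G}

lemma IsRegularOfDegree.mul_card_le_sum_add_card_interedges {D : ℕ}
    (hG : G.IsRegularOfDegree D) {S U : Finset V} (hSU : S ⊆ U) :
    D * #S ≤ ∑ v ∈ U, #(G.neighborFinset v ∩ S) + #(G.interedges U Uᶜ) := by
  have hsplit (v : V) : #(G.neighborFinset v ∩ U) + #(G.neighborFinset v ∩ Uᶜ) = D := by
    rw [← hG v, ← card_neighborFinset_eq_degree, ← card_union_of_disjoint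
      (disjoint_compl_right.mono inter_subset_right inter_subset_right), ← inter_union_distrib_left,
      union_compl, inter_univ]
  calc D * #S = ∑ v ∈ S, (#(G.neighborFinset v ∩ U) + #(G.neighborFinset v ∩ Uᶜ)) := by
        simp [hsplit, mul_comm]
    _ = ∑ v ∈ U, #(G.neighborFinset v ∩ S) + ∑ v ∈ S, #(G.neighborFinset v ∩ Uᶜ) := by
        rw [sum_add_distrib, sum_card_neighborFinset_inter_comm]
    _ ≤ ∑ v ∈ U, #(G.neighborFinset v ∩ S) + #(G.interedges U Uᶜ) := by
        rw [card_interedges_eq_sum_card_neighborFinset_inter]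
        exact Nat.add_le_add_left (sum_le_sum_of_subset hSU) _

variable (G) in
noncomputable def robustNeighborhood (ν : ℝ) (U S : Finset V) : Finset V :=
  {v ∈ U | ν * #U ≤ #(G.neighborFinset v ∩ S)}

lemma IsRegularOfDegree.mul_card_le_card_robustNeighborhood_mul {D : ℕ}
    (hG : G.IsRegularOfDegree D) {S U : Finset V} (hSU : S ⊆ U) {ν b : ℝ} (hν : 0 ≤ ν)
    (hb : ∀ v, (#(G.neighborFinset v ∩ S) : ℝ) ≤ b) :
    (D * #S : ℝ) ≤ #(G.robustNeighborhood ν U S) * b + ν * #U ^ 2 + #(G.interedges U Uᶜ) := by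
  have hsum := sum_le_card_filter_mul_add_card_mul U (fun v => (#(G.neighborFinset v ∩ S) : ℝ))
    (mul_nonneg hν (Nat.cast_nonneg #U)) fun v _ _ => hb v
  have hcount : (D * #S : ℝ) ≤
      ∑ v ∈ U, (#(G.neighborFinset v ∩ S) : ℝ) + #(G.interedges U Uᶜ) := by
    exact_mod_cast hG.mul_card_le_sum_add_card_interedges hSU
  rw [robustNeighborhood]
  linarith

lemma IsRegularOfDegree.card_sub_le_card_robustNeighborhood {D : ℕ}
    (hG : G.IsRegularOfDegree D) {S U : Finset V} (hSU : S ⊆ U) {α ν ρ n : ℝ}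
    (hα : 0 < α) (hn : 0 < n) (hD : α * n ≤ D) (hUn : #U ≤ n)
    (hcut : #(G.interedges U Uᶜ) ≤ ρ * n ^ 2) (hν : 0 ≤ ν) (hρν : ρ ≤ ν) (hνα : √ν ≤ α / 2) :
    #S - √ν * n ≤ #(G.robustNeighborhood ν U S) := by
  have hkey := hG.mul_card_le_card_robustNeighborhood_mul hSU hν (b := D) fun v =>
    Nat.cast_le.2 <| (card_le_card inter_subset_left).trans_eq (hG v)
  have hDpos : (0 : ℝ) < D := hD.trans_lt' (mul_pos hα hn)
  have hloss : ν * #U ^ 2 + ρ * n ^ 2 ≤ √ν * n * D := by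
    have hU2 : (#U : ℝ) ^ 2 ≤ n ^ 2 := pow_le_pow_left₀ (Nat.cast_nonneg _) hUn 2
    calc ν * #U ^ 2 + ρ * n ^ 2 ≤ 2 * √ν ^ 2 * n ^ 2 := by
          rw [Real.sq_sqrt hν]; nlinarith
      _ = √ν * n ^ 2 * (2 * √ν) := by ring
      _ ≤ √ν * n ^ 2 * α := by gcongr; linarith
      _ = √ν * n * (α * n) := by ring
      _ ≤ √ν * n * D := by gcongr
  have hmul : (#S - √ν * n) * D ≤ #(G.robustNeighborhood ν U S) * D := by linarith
  exact le_of_mul_le_mul_right hmul hDpos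

lemma IsRegularOfDegree.degree_sub_le_card_robustNeighborhood {D : ℕ}
    (hG : G.IsRegularOfDegree D) {S U : Finset V} (hSU : S ⊆ U) {τ ν ρ n : ℝ}
    (hτ : 0 < τ) (hρ : 0 < ρ) (hn : 0 < n) (hUn : #U ≤ n) (hU : √ρ * n ≤ #U)
    (hcut : #(G.interedges U Uᶜ) ≤ ρ * n ^ 2) (hS : τ * #U ≤ #S) (hν : 0 ≤ ν)
    (hρν : √ρ ≤ √ν * τ / 2) (hντ : √ν ≤ τ / 2) :
    D - √ν * n ≤ #(G.robustNeighborhood ν U S) := by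
  have hkey := hG.mul_card_le_card_robustNeighborhood_mul hSU hν (b := #S) fun v =>
    Nat.cast_le.2 <| card_le_card inter_subset_right
  have hSpos : (0 : ℝ) < #S := hS.trans_lt' (mul_pos hτ (hU.trans_lt' (by positivity)))
  have hcutS : ρ * n ^ 2 ≤ √ν / 2 * n * #S := by
    calc ρ * n ^ 2 = √ρ * (√ρ * n) * n := by
          linear_combination n ^ 2 * (Real.mul_self_sqrt hρ.le).symm
      _ ≤ √ν * τ / 2 * #U * n := by gcongr
      _ = √ν / 2 * n * (τ * #U) := by ring
      _ ≤ √ν / 2 * n * #S := by gcongr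
  have hsmallS : ν * #U ^ 2 ≤ √ν / 2 * n * #S := by
    calc ν * #U ^ 2 = √ν * √ν * #U * #U := by rw [Real.mul_self_sqrt hν]; ring
      _ ≤ √ν * (τ / 2) * #U * n := by gcongr
      _ = √ν / 2 * n * (τ * #U) := by ring
      _ ≤ √ν / 2 * n * #S := by gcongr
  have hmul : (D - √ν * n) * #S ≤ #(G.robustNeighborhood ν U S) * #S := by linarith
  exact le_of_mul_le_mul_right hmul hSpos

end SimpleGraph

/-- Let `0 < 1/n ≪ ρ ≪ ν ≪ τ ≪ α < 1`, let `G` be `D`-regular on `n` vertices with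
`D ≥ αn`, let `U` be a `ρ`-component (`|U| ≥ √ρ·n` and `e(U, V(G)\U) ≤ ρn²`), and
let `S ⊆ U` with `|S| ≥ τ|U|`.  Then `N := RN_{ν,U}(S)`, the set of vertices of `U`
with at least `ν|U|` neighbours in `S`, satisfies `|N| ≥ |S| - √ν·n` and
`|N| ≥ D - √ν·n`. -/
theorem stmt13 :
    ∀ α : ℝ, 0 < α → α < 1 →
    ∃ τ₀ : ℝ, 0 < τ₀ ∧ ∀ τ : ℝ, 0 < τ → τ ≤ τ₀ →
    ∃ ν₀ : ℝ, 0 < ν₀ ∧ ∀ ν : ℝ, 0 < ν → ν ≤ ν₀ →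
    ∃ ρ₀ : ℝ, 0 < ρ₀ ∧ ∀ ρ : ℝ, 0 < ρ → ρ ≤ ρ₀ →
    ∃ n₀ : ℕ, ∀ n : ℕ, n₀ ≤ n →
    ∀ (V : Type) [Fintype V] [DecidableEq V] (G : SimpleGraph V) [DecidableRel G.Adj]
      (D : ℕ), Fintype.card V = n → G.IsRegularOfDegree D → α * (n : ℝ) ≤ D →
    ∀ U : Finset V,
      Real.sqrt ρ * (n : ℝ) ≤ U.card →
      ((G.interedges U Uᶜ).card : ℝ) ≤ ρ * (n : ℝ) ^ 2 →
    ∀ S ⊆ U, τ * (U.card : ℝ) ≤ S.card →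
      (S.card : ℝ) - Real.sqrt ν * n ≤
        ((U.filter fun v =>
          ν * (U.card : ℝ) ≤ ((G.neighborFinset v ∩ S).card : ℝ)).card : ℝ) ∧
      (D : ℝ) - Real.sqrt ν * n ≤
        ((U.filter fun v =>
          ν * (U.card : ℝ) ≤ ((G.neighborFinset v ∩ S).card : ℝ)).card : ℝ) := by
  intro α hα _
  refine ⟨1, one_pos, fun τ hτ hτ1 => ?_⟩
  refine ⟨(min α τ / 2) ^ 2, by positivity, fun ν hν hν₀ => ?_⟩
  refine ⟨(√ν * τ / 2) ^ 2, by positivity, fun ρ hρ hρ₀ => ?_⟩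
  refine ⟨1, fun n hn V _ _ G _ D hcard hG hD U hU hcut S hSU hS => ?_⟩
  have hsqrtν : √ν ≤ min α τ / 2 := (Real.sqrt_le_left (by positivity)).2 hν₀
  have hsqrtρ : √ρ ≤ √ν * τ / 2 := (Real.sqrt_le_left (by positivity)).2 hρ₀
  have hρν : ρ ≤ ν := by
    have hτ2 : τ ^ 2 ≤ 1 := pow_le_one₀ hτ.le hτ1
    nlinarith [Real.sq_sqrt hν.le]
  have hn : (0 : ℝ) < n := by exact_mod_cast hn
  have hUn : (#U : ℝ) ≤ n := by exact_mod_cast hcard ▸ card_le_univ U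
  exact ⟨hG.card_sub_le_card_robustNeighborhood hSU hα hn hD hUn hcut hν.le hρν
      (hsqrtν.trans (by gcongr; exact min_le_left α τ)),
    hG.degree_sub_le_card_robustNeighborhood hSU hτ hρ hn hUn hU hcut hS hν.le hsqrtρ
      (hsqrtν.trans (by gcongr; exact min_le_right α τ))⟩
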